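/- Let n ≥ 4, 1 < i* < n − 1 and γ ∈ (0,1). The policy π* that selects a1 (move right) in every non-terminal state s ≤ i* and a2 (move left) in every non-terminal state s > i* is optimal: for every deterministic stationary policy π and every state s0, V^π(s0) ≤ V^{π*}(s0). -/
import Mathlib


/- The n-state deterministic chain MDP: states {1, …, n}, states 1 and n absorbing
terminal; from a non-terminal state, action a1 moves right (s+1) and a2 moves left
(s−1). Reward 1 in states i* and i*+1, 0 elsewhere; value is the γ-discounted
infinite-horizon sum along the deterministic trajectory. -/

inductive Act where
  | a1 : Act
  | a2 : Act
deriving DecidableEq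

/-- One transition step: terminal states 1 and n are absorbing; otherwise the
policy's action moves right (a1) or left (a2). -/
def stepC (n : ℤ) (π : ℤ → Act) (s : ℤ) : ℤ :=
  if s = 1 ∨ s = n then s
  else match π s with
    | .a1 => s + 1
    | .a2 => s - 1

/-- The trajectory from start state s0 under policy π. -/
def traj (n : ℤ) (π : ℤ → Act) (s0 : ℤ) : ℕ → ℤ
  | 0 => s0
  | t + 1 => stepC n π (traj n π s0 t)

/-- Reward: 1 in states i* and i*+1, 0 otherwise. -/
noncomputable def Rew (istar s : ℤ) : ℝ :=
  if s = istar ∨ s = istar + 1 then 1 else 0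

/-- Value of policy π from start state s0: V^π(s0) = Σ_{t=0}^∞ γ^t R(s_t). -/
noncomputable def V (n : ℤ) (γ : ℝ) (istar : ℤ) (π : ℤ → Act) (s0 : ℤ) : ℝ :=
  ∑' t : ℕ, γ ^ t * Rew istar (traj n π s0 t)

/-- The policy π*: a1 (move right) in states s ≤ i*, a2 (move left) in states s > i*. -/
def piStar (istar : ℤ) : ℤ → Act := fun s => if s ≤ istar then .a1 else .a2

/-- Distance from s to the nearest rewarded state (i* or i*+1). -/
def dist (istar s : ℤ) : ℕ := min (s - istar).natAbs (s - (istar + 1)).natAbs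

lemma rew_nonneg (istar s : ℤ) : 0 ≤ Rew istar s := by
  unfold Rew; split_ifs <;> norm_num

lemma rew_le_one (istar s : ℤ) : Rew istar s ≤ 1 := by
  unfold Rew; split_ifs <;> norm_num

lemma traj_terminal (n : ℤ) (π : ℤ → Act) (s0 : ℤ) (h : s0 = 1 ∨ s0 = n) :
    ∀ t, traj n π s0 t = s0 := by
  intro t; induction t with
  | zero => rfl
  | succ t ih => simp [traj, ih, stepC, if_pos h]

lemma stepC_abs (n : ℤ) (π : ℤ → Act) (s : ℤ) : (stepC n π s - s).natAbs ≤ 1 := by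
  unfold stepC; split_ifs
  · simp
  · cases h : π s <;> simp [h]

lemma traj_bound (n : ℤ) (π : ℤ → Act) (s0 : ℤ) (t : ℕ) :
    (traj n π s0 t - s0).natAbs ≤ t := by
  induction t with
  | zero => simp [traj]
  | succ t ih =>
    have h1 := stepC_abs n π (traj n π s0 t)
    have h2 : traj n π s0 (t+1) = stepC n π (traj n π s0 t) := rfl
    omega

lemma rew_traj_zero (n istar : ℤ) (π : ℤ → Act) (s0 : ℤ) (t : ℕ)
    (ht : t < _root_.dist istar s0) : Rew istar (traj n π s0 t) = 0 := by
  have h1 := traj_bound n π s0 t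
  unfold Rew
  rw [if_neg]
  unfold _root_.dist at ht
  rintro (h | h) <;> rw [h] at h1 <;> omega

lemma reach_right (n istar s0 : ℤ) (hs1 : 1 < s0) (hn : istar < n) :
    ∀ k : ℕ, s0 + k ≤ istar → traj n (piStar istar) s0 k = s0 + k := by
  intro k; induction k with
  | zero => intro _; simp [traj]
  | succ k ih =>
    intro hk
    have hk0 : (((k:ℕ)+1 : ℕ) : ℤ) = (k:ℤ) + 1 := by push_cast; ring
    rw [hk0] at hk
    have hk' : s0 + (k:ℤ) ≤ istar := by omega
    have h2 : traj n (piStar istar) s0 (k+1) = stepC n (piStar istar) (s0 + k) := by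
      rw [show traj n (piStar istar) s0 (k+1) = stepC n (piStar istar) (traj n (piStar istar) s0 k) from rfl, ih hk']
    rw [h2, hk0]
    unfold stepC
    rw [if_neg (by omega)]
    have hp : piStar istar (s0 + k) = Act.a1 := if_pos hk'
    rw [hp]
    show s0 + (k:ℤ) + 1 = s0 + ((k:ℤ) + 1)
    ring

lemma reach_left (n istar s0 : ℤ) (hs2 : s0 < n) (hi1 : 1 < istar) :
    ∀ k : ℕ, istar + 1 ≤ s0 - k → traj n (piStar istar) s0 k = s0 - k := by
  intro k; induction k with
  | zero => intro _; simp [traj]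
  | succ k ih =>
    intro hk
    have hk0 : (((k:ℕ)+1 : ℕ) : ℤ) = (k:ℤ) + 1 := by push_cast; ring
    rw [hk0] at hk
    have hk' : istar + 1 ≤ s0 - (k:ℤ) := by omega
    have h2 : traj n (piStar istar) s0 (k+1) = stepC n (piStar istar) (s0 - k) := by
      rw [show traj n (piStar istar) s0 (k+1) = stepC n (piStar istar) (traj n (piStar istar) s0 k) from rfl, ih hk']
    rw [h2, hk0]
    unfold stepC
    rw [if_neg (by omega)]
    have hp : piStar istar (s0 - k) = Act.a2 := if_neg (by omega)
    rw [hp]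
    show s0 - (k:ℤ) - 1 = s0 - ((k:ℤ) + 1)
    ring

lemma traj_at_dist (n istar s0 : ℤ) (hi1 : 1 < istar) (hi2 : istar < n - 1)
    (hs1 : 1 < s0) (hs2 : s0 < n) :
    traj n (piStar istar) s0 (_root_.dist istar s0) = istar ∨
    traj n (piStar istar) s0 (_root_.dist istar s0) = istar + 1 := by
  by_cases h : s0 ≤ istar
  · left
    have hd : ((_root_.dist istar s0 : ℕ) : ℤ) = istar - s0 := by unfold _root_.dist; omega
    rw [reach_right n istar s0 hs1 (by omega) _ (by omega)]
    omega
  · right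
    have hd : ((_root_.dist istar s0 : ℕ) : ℤ) = s0 - (istar + 1) := by unfold _root_.dist; omega
    rw [reach_left n istar s0 hs2 hi1 _ (by omega)]
    omega

lemma traj_osc (n istar x : ℤ) (hi1 : 1 < istar) (hi2 : istar < n - 1)
    (hx : x = istar ∨ x = istar + 1) :
    ∀ k, traj n (piStar istar) x k = istar ∨ traj n (piStar istar) x k = istar + 1 := by
  intro k; induction k with
  | zero => exact hx
  | succ k ih =>
    have h2 : traj n (piStar istar) x (k+1) = stepC n (piStar istar) (traj n (piStar istar) x k) := rfl
    rcases ih with h | h <;> rw [h2, h] <;> unfold stepC <;> rw [if_neg (by omega)]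
    · right
      have hp : piStar istar istar = Act.a1 := if_pos le_rfl
      rw [hp]
    · left
      have hp : piStar istar (istar + 1) = Act.a2 := if_neg (by omega)
      rw [hp]
      show istar + 1 - 1 = istar
      ring

lemma traj_add (n : ℤ) (π : ℤ → Act) (s0 : ℤ) (a b : ℕ) :
    traj n π s0 (a + b) = traj n π (traj n π s0 a) b := by
  induction b with
  | zero => rfl
  | succ b ih =>
    have : a + (b + 1) = (a + b) + 1 := by omega
    rw [this]
    show stepC n π (traj n π s0 (a+b)) = stepC n π (traj n π (traj n π s0 a) b)
    rw [ih]

lemma rew_traj_one (n istar s0 : ℤ) (hi1 : 1 < istar) (hi2 : istar < n - 1)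
    (hs1 : 1 < s0) (hs2 : s0 < n) (t : ℕ) (ht : _root_.dist istar s0 ≤ t) :
    Rew istar (traj n (piStar istar) s0 t) = 1 := by
  obtain ⟨k, rfl⟩ := Nat.exists_eq_add_of_le ht
  rw [traj_add]
  have := traj_osc n istar _ hi1 hi2 (traj_at_dist n istar s0 hi1 hi2 hs1 hs2) k
  unfold Rew
  rw [if_pos this]

/-- for n ≥ 4, 1 < i* < n − 1 and γ ∈ (0,1), the policy π* is
optimal: every deterministic stationary policy π satisfies V^π(s0) ≤ V^{π*}(s0)
for every state s0 ∈ {1, …, n}. -/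
theorem stmt12 (n istar : ℤ) (γ : ℝ) (hn : 4 ≤ n) (hi1 : 1 < istar)
    (hi2 : istar < n - 1) (hγ0 : 0 < γ) (hγ1 : γ < 1)
    (π : ℤ → Act) (s0 : ℤ) (hs0 : 1 ≤ s0 ∧ s0 ≤ n) :
    V n γ istar π s0 ≤ V n γ istar (piStar istar) s0 := by
  obtain ⟨hs1, hs2⟩ := hs0
  by_cases hterm : s0 = 1 ∨ s0 = n
  · have h1 : ∀ π' : ℤ → Act, V n γ istar π' s0 = 0 := by
      intro π'; unfold V
      have h0 : ∀ t, γ ^ t * Rew istar (traj n π' s0 t) = 0 := by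
        intro t
        rw [traj_terminal _ _ _ hterm]
        have : Rew istar s0 = 0 := by
          unfold Rew; rw [if_neg]; omega
        rw [this, mul_zero]
      simp [h0]
    rw [h1, h1]
  · push_neg at hterm
    have hs1' : 1 < s0 := lt_of_le_of_ne hs1 (Ne.symm hterm.1)
    have hs2' : s0 < n := lt_of_le_of_ne hs2 hterm.2
    have hsum : ∀ π' : ℤ → Act, Summable (fun t : ℕ => γ ^ t * Rew istar (traj n π' s0 t)) := by
      intro π'
      apply Summable.of_nonneg_of_le
        (fun t => mul_nonneg (pow_nonneg hγ0.le t) (rew_nonneg _ _))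
        (fun t => by
          calc γ ^ t * Rew istar (traj n π' s0 t) ≤ γ ^ t * 1 :=
            mul_le_mul_of_nonneg_left (rew_le_one _ _) (pow_nonneg hγ0.le t)
          _ = γ ^ t := mul_one _)
      exact summable_geometric_of_lt_one hγ0.le hγ1
    unfold V
    apply Summable.tsum_le_tsum _ (hsum π) (hsum (piStar istar))
    intro t
    by_cases ht : t < _root_.dist istar s0
    · rw [rew_traj_zero n istar π s0 t ht, mul_zero, rew_traj_zero n istar (piStar istar) s0 t ht, mul_zero]
    · rw [rew_traj_one n istar s0 hi1 hi2 hs1' hs2' t (by omega), mul_one]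
      calc γ ^ t * Rew istar (traj n π s0 t) ≤ γ ^ t * 1 :=
        mul_le_mul_of_nonneg_left (rew_le_one _ _) (pow_nonneg hγ0.le t)
      _ = γ ^ t := mul_one _
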